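/- arXiv:2604.04416 — 3 statements merged into one kernel-verified Lean document; each statement's English description precedes it below -/
import Mathlib

section
/- Let a > 1 and let (Ω, μ) be a measure space with 0 < μ(Ω) < ∞. Let u : Ω → ℝ be integrable, with e^{u} also integrable, and suppose ∫_Ω (e^{u} − 1 − a·u) dμ = 0. Let ū := (1/μ(Ω)) ∫_Ω u dμ denote the average of u. Then 0 ≤ ū ≤ ξ_a, where ξ_a is the unique positive root of e^t − 1 − a·t = 0. -/
/-! By Jensen's inequality for `exp`, the constraint `∫ (eᵘ - 1 - a u) dμ = 0` forces the average
`ū` into the sublevel set `{t | eᵗ ≤ 1 + a t}`. Since `t ↦ eᵗ - 1 - a t` is strictly convex and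
vanishes at `0` and `ξ`, this set is `[0, ξ]`. -/

open MeasureTheory Real

namespace Real

lemma nonneg_of_exp_le_one_add_mul {a t : ℝ} (ha : 1 < a) (h : exp t ≤ 1 + a * t) : 0 ≤ t := by
  nlinarith [add_one_le_exp t]

lemma le_of_exp_le_one_add_mul {a ξ t : ℝ} (hξ : 0 < ξ) (hroot : exp ξ - 1 - a * ξ = 0)
    (h : exp t ≤ 1 + a * t) : t ≤ ξ := by
  by_contra! hξt
  have ht : 0 < t := hξ.trans hξt
  -- write `ξ = (1 - θ) • 0 + θ • t` and compare `exp` with its chord over `[0, t]`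
  obtain ⟨θ, hθ0, hθ1, hθt⟩ : ∃ θ : ℝ, 0 < θ ∧ θ < 1 ∧ θ * t = ξ :=
    ⟨ξ / t, by positivity, (div_lt_one ht).2 hξt, div_mul_cancel₀ _ ht.ne'⟩
  have hchord : exp ξ < (1 - θ) * exp 0 + θ * exp t := by
    have := strictConvexOn_exp.2 (Set.mem_univ 0) (Set.mem_univ t) ht.ne
      (sub_pos.2 hθ1) hθ0 (sub_add_cancel 1 θ)
    simpa only [smul_eq_mul, mul_zero, zero_add, hθt] using this
  have hθh : θ * exp t ≤ θ * (1 + a * t) := mul_le_mul_of_nonneg_left h hθ0.le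
  have hθξ : θ * (1 + a * t) = θ + a * ξ := by rw [← hθt]; ring
  rw [exp_zero] at hchord
  linarith

end Real

section Average

variable {α : Type*} [MeasurableSpace α] {μ : Measure α} [IsFiniteMeasure μ] [NeZero μ]
  {u : α → ℝ}

lemma exp_average_le_average_exp (hu : Integrable u μ) (hexp : Integrable (fun x => exp (u x)) μ) :
    exp (⨍ x, u x ∂μ) ≤ ⨍ x, exp (u x) ∂μ :=
  convexOn_exp.map_average_le continuous_exp.continuousOn isClosed_univ
    (.of_forall fun x => Set.mem_univ (u x)) hu hexp

lemma average_exp_eq_one_add_mul_average {a : ℝ} (hu : Integrable u μ)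
    (hexp : Integrable (fun x => exp (u x)) μ)
    (hzero : ∫ x, (exp (u x) - 1 - a * u x) ∂μ = 0) :
    ⨍ x, exp (u x) ∂μ = 1 + a * ⨍ x, u x ∂μ := by
  have hμ : μ.real Set.univ ≠ 0 := (measureReal_univ_pos (μ := μ)).ne'
  have hexp_sub : Integrable (fun x => exp (u x) - 1) μ := hexp.sub (integrable_const 1)
  rw [integral_sub hexp_sub (hu.const_mul a),
    integral_sub hexp (integrable_const 1), integral_const, integral_const_mul,
    smul_eq_mul, mul_one] at hzero
  rw [average_eq, average_eq, smul_eq_mul, smul_eq_mul]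
  field_simp
  linarith

end Average

theorem stmt_6 {α : Type*} [MeasurableSpace α] (μ : Measure α)
    (hpos : 0 < μ Set.univ) (hfin : μ Set.univ < ⊤)
    (a : ℝ) (ha : 1 < a) (ξ : ℝ) (hξ : 0 < ξ)
    (hroot : Real.exp ξ - 1 - a * ξ = 0)
    (u : α → ℝ) (hu : Integrable u μ)
    (hexp : Integrable (fun x => Real.exp (u x)) μ)
    (hzero : ∫ x, (Real.exp (u x) - 1 - a * u x) ∂μ = 0)
    (ubar : ℝ) (hubar : ubar = (μ Set.univ).toReal⁻¹ * ∫ x, u x ∂μ) :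
    0 ≤ ubar ∧ ubar ≤ ξ := by
  have : IsFiniteMeasure μ := ⟨hfin⟩
  have : NeZero μ := ⟨fun h => by simp [h] at hpos⟩
  have hubar_avg : ubar = ⨍ x, u x ∂μ := by rw [hubar, average_eq, smul_eq_mul, measureReal_def]
  have hsub : exp ubar ≤ 1 + a * ubar := by
    rw [hubar_avg, ← average_exp_eq_one_add_mul_average hu hexp hzero]
    exact exp_average_le_average_exp hu hexp
  exact ⟨nonneg_of_exp_le_one_add_mul ha hsub, le_of_exp_le_one_add_mul hξ hroot hsub⟩
end

section
/- Let Ω ⊆ ℝ² be a measurable set and D > 0 a constant with ‖x − y‖ ≤ D for all x, y ∈ Ω (e.g. D is the diameter of Ω). Let K ≥ 0, let g : Ω → ℝ be integrable with ‖g‖_{L¹(Ω)} = ∫_Ω |g| dy > 0, and let v : Ω → ℝ be a measurable function satisfying the pointwise bound |v(x)| ≤ ∫_Ω ((1/π)·log(D/‖x − y‖) + K)·|g(y)| dy for almost every x ∈ Ω. Then ∫_Ω exp( π·|v(x)| / ‖g‖_{L¹(Ω)} ) dx ≤ 2π·D²·e^{πK}. -/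
/-!
With `M = ∫_Ω |g|`, the hypothesis says that `π |v x| / M` is at most the average of
`log (D / ‖x - y‖) + π K` against the probability density `|g| / M`. Jensen's inequality for `exp`
turns this into `exp (π |v x| / M) ≤ e^{π K} / M * ∫_Ω D / ‖x - y‖ |g y| dy`, because
`exp (log (D / r)) = D / r`. Integrating in `x` and exchanging the integrals (Tonelli) leaves
`∫_Ω D / ‖x - y‖ dx ≤ ∫_{B(y, D)} D / ‖x - y‖ dx = 2 π D²`, computed in polar coordinates.
-/

open MeasureTheory Real Set Metric
open scoped ENNReal

theorem ofReal_exp_integral_div_mul_le_lintegral {α : Type*} [MeasurableSpace α]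
    {μ : Measure α} {φ w : α → ℝ} (hφ : AEMeasurable φ μ) (hw : 0 ≤ᵐ[μ] w)
    (hwi : Integrable w μ) (hφw : Integrable (fun x ↦ φ x * w x) μ) :
    ENNReal.ofReal (exp ((∫ x, φ x * w x ∂μ) / ∫ x, w x ∂μ) * ∫ x, w x ∂μ) ≤
      ∫⁻ x, ENNReal.ofReal (exp (φ x) * w x) ∂μ := by
  rcases (integral_nonneg_of_ae hw).eq_or_lt with hM | hM
  · simp [← hM]
  have hexp_nonneg : 0 ≤ᵐ[μ] fun x ↦ exp (φ x) * w x := by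
    filter_upwards [hw] with x hx using mul_nonneg (exp_pos _).le hx
  have hexp_meas : AEStronglyMeasurable (fun x ↦ exp (φ x) * w x) μ :=
    (measurable_exp.comp_aemeasurable hφ).aestronglyMeasurable.mul hwi.1
  by_cases hfin : ∫⁻ x, ENNReal.ofReal (exp (φ x) * w x) ∂μ = ∞
  · simp [hfin]
  have hexp : Integrable (fun x ↦ exp (φ x) * w x) μ :=
    (lintegral_ofReal_ne_top_iff_integrable hexp_meas hexp_nonneg).mp hfin
  -- Jensen through the tangent line of `exp` at `a`, integrated against `w`
  have htangent (a : ℝ) :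
      exp a * ((∫ x, φ x * w x ∂μ) - a * (∫ x, w x ∂μ) + ∫ x, w x ∂μ) ≤
        ∫ x, exp (φ x) * w x ∂μ := by
    have hpt : ∀ᵐ x ∂μ, exp a * (φ x * w x) + exp a * (1 - a) * w x ≤ exp (φ x) * w x := by
      filter_upwards [hw] with x hx
      calc exp a * (φ x * w x) + exp a * (1 - a) * w x = exp a * (φ x - a + 1) * w x := by ring
        _ ≤ exp a * exp (φ x - a) * w x := by gcongr; exact add_one_le_exp _
        _ = exp (φ x) * w x := by rw [← exp_add, add_sub_cancel]
    have hint : ∫ x, (exp a * (φ x * w x) + exp a * (1 - a) * w x) ∂μ ≤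
        ∫ x, exp (φ x) * w x ∂μ :=
      integral_mono_ae ((hφw.const_mul _).add (hwi.const_mul _)) hexp hpt
    rw [integral_add (hφw.const_mul _) (hwi.const_mul _), integral_const_mul,
      integral_const_mul] at hint
    linear_combination hint
  have h := htangent ((∫ x, φ x * w x ∂μ) / ∫ x, w x ∂μ)
  rw [div_mul_cancel₀ _ hM.ne', sub_self, zero_add] at h
  rw [← ofReal_integral_eq_lintegral_ofReal hexp hexp_nonneg]
  exact ENNReal.ofReal_le_ofReal h

theorem lintegral_fun_norm_addHaar {E : Type*} [NormedAddCommGroup E] [NormedSpace ℝ E]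
    [FiniteDimensional ℝ E] [MeasurableSpace E] [BorelSpace E] [Nontrivial E]
    (μ : Measure E) [μ.IsAddHaarMeasure] {f : ℝ → ℝ≥0∞} (hf : Measurable f) :
    ∫⁻ x, f ‖x‖ ∂μ = Module.finrank ℝ E * μ (ball 0 1) *
      ∫⁻ y in Ioi (0 : ℝ), ENNReal.ofReal (y ^ (Module.finrank ℝ E - 1)) * f y :=
  calc ∫⁻ x, f ‖x‖ ∂μ = ∫⁻ x : ({(0 : E)}ᶜ : Set E), f ‖x.1‖ ∂μ.comap (↑) := by
        rw [lintegral_subtype_comap (measurableSet_singleton _).compl fun x ↦ f ‖x‖,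
          restrict_compl_singleton]
    _ = ∫⁻ x, f x.2 ∂μ.toSphere.prod (.volumeIoiPow (Module.finrank ℝ E - 1)) := by
        simpa using (μ.measurePreserving_homeomorphUnitSphereProd.lintegral_comp_emb
          (Homeomorph.measurableEmbedding _) (f ∘ Subtype.val ∘ Prod.snd))
    _ = μ.toSphere univ * ∫⁻ y : Ioi (0 : ℝ), f y ∂.volumeIoiPow (Module.finrank ℝ E - 1) := by
        rw [lintegral_prod (fun z : sphere (0 : E) 1 × Ioi (0 : ℝ) ↦ f z.2)
          (hf.comp (measurable_subtype_coe.comp measurable_snd)).aemeasurable]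
        simp [mul_comm]
    _ = _ := by
        rw [μ.toSphere_apply_univ, Measure.volumeIoiPow,
          lintegral_withDensity_eq_lintegral_mul _
            (measurable_subtype_coe.pow_const _).ennreal_ofReal
            (g := fun y : Ioi (0 : ℝ) ↦ f y) (hf.comp measurable_subtype_coe),
          ← lintegral_subtype_comap measurableSet_Ioi fun y ↦ ENNReal.ofReal (y ^ _) * f y]
        simp only [Pi.mul_apply, mul_comm]

theorem lintegral_closedBall_div_norm_sub (y : EuclideanSpace ℝ (Fin 2)) {r : ℝ} (hr : 0 ≤ r) :
    ∫⁻ x in closedBall y r, ENNReal.ofReal (r / ‖x - y‖) = ENNReal.ofReal (2 * π * r ^ 2) := by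
  set f : ℝ → ℝ≥0∞ := (Iic r).indicator fun s ↦ ENNReal.ofReal (r / s)
  have hf : Measurable f :=
    (measurable_const.div measurable_id).ennreal_ofReal.indicator measurableSet_Iic
  have hradial : ∀ s ∈ Ioi (0 : ℝ), ENNReal.ofReal (s ^ 1) * f s =
      (Iic r).indicator (fun _ ↦ ENNReal.ofReal r) s := by
    intro s (hs : 0 < s)
    by_cases hsr : s ≤ r
    · simp [f, hsr, ← ENNReal.ofReal_mul hs.le, mul_div_cancel₀ _ hs.ne']
    · simp [f, hsr]
  calc ∫⁻ x in closedBall y r, ENNReal.ofReal (r / ‖x - y‖) = ∫⁻ x, f ‖x - y‖ := by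
        rw [← lintegral_indicator measurableSet_closedBall]
        refine lintegral_congr fun x ↦ ?_
        simp [f, indicator, dist_eq_norm]
    _ = ∫⁻ x, f ‖x‖ := lintegral_sub_right_eq_self (fun x ↦ f ‖x‖) y
    _ = 2 * ENNReal.ofReal π * ∫⁻ s in Ioc 0 r, ENNReal.ofReal r := by
        rw [lintegral_fun_norm_addHaar volume hf, finrank_euclideanSpace_fin,
          setLIntegral_congr_fun measurableSet_Ioi hradial,
          lintegral_indicator measurableSet_Iic, Measure.restrict_restrict measurableSet_Iic,
          Iic_inter_Ioi]
        simp
    _ = ENNReal.ofReal (2 * π * r ^ 2) := by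
        rw [setLIntegral_const, Real.volume_Ioc, sub_zero, ← ENNReal.ofReal_mul hr,
          ← ENNReal.ofReal_ofNat 2, ← ENNReal.ofReal_mul zero_le_two, mul_assoc,
          ← ENNReal.ofReal_mul (by positivity)]
        ring_nf

theorem abs_log_div_le_div {r D : ℝ} (hr : 0 ≤ r) (hrD : r ≤ D) : |log (D / r)| ≤ D / r := by
  rcases hr.eq_or_lt with rfl | hr
  · simp
  have hone : 1 ≤ D / r := (one_le_div hr).mpr hrD
  rw [abs_of_nonneg (log_nonneg hone)]
  exact log_le_self (zero_le_one.trans hone)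

theorem ofReal_exp_mul_le_lintegral_div_norm_sub {Ω : Set (EuclideanSpace ℝ (Fin 2))}
    (hΩ : MeasurableSet Ω) {D K t : ℝ} (hD : 0 ≤ D) {g : EuclideanSpace ℝ (Fin 2) → ℝ}
    (hg : IntegrableOn g Ω) {x : EuclideanSpace ℝ (Fin 2)} (hx : ∀ y ∈ Ω, ‖x - y‖ ≤ D)
    (ht : t ≤ ∫ y in Ω, ((1 / π) * log (D / ‖x - y‖) + K) * |g y|) :
    ENNReal.ofReal (exp (π * t / ∫ y in Ω, |g y|)) * ENNReal.ofReal (∫ y in Ω, |g y|) ≤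
      ENNReal.ofReal (exp (π * K)) *
        ∫⁻ y in Ω, ENNReal.ofReal (D / ‖x - y‖) * ENNReal.ofReal |g y| := by
  set T := ∫⁻ y in Ω, ENNReal.ofReal (D / ‖x - y‖) * ENNReal.ofReal |g y|
  by_cases hT : T = ∞
  · simp [hT, exp_pos]
  have hkernel_meas : Measurable fun y ↦ D / ‖x - y‖ := by fun_prop
  have hkernel : IntegrableOn (fun y ↦ D / ‖x - y‖ * |g y|) Ω := by
    refine (lintegral_ofReal_ne_top_iff_integrable (f := fun y ↦ D / ‖x - y‖ * |g y|)
      (hkernel_meas.aestronglyMeasurable.mul hg.abs.1)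
      (ae_of_all _ fun y ↦ mul_nonneg (div_nonneg hD (norm_nonneg _)) (abs_nonneg _))).mp ?_
    simpa only [ENNReal.ofReal_mul (div_nonneg hD (norm_nonneg _))] using hT
  have hlog : IntegrableOn (fun y ↦ log (D / ‖x - y‖) * |g y|) Ω := by
    refine hkernel.mono' ((measurable_log.comp hkernel_meas).aestronglyMeasurable.mul hg.abs.1) ?_
    filter_upwards [ae_restrict_mem hΩ] with y hy
    rw [norm_mul, norm_abs_eq_norm, Real.norm_eq_abs, Real.norm_eq_abs]
    exact mul_le_mul_of_nonneg_right (abs_log_div_le_div (norm_nonneg _) (hx y hy)) (abs_nonneg _)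
  set φ : EuclideanSpace ℝ (Fin 2) → ℝ := fun y ↦ log (D / ‖x - y‖) + π * K
  have hφw : IntegrableOn (fun y ↦ φ y * |g y|) Ω := by
    refine (hlog.add (hg.abs.const_mul (π * K))).congr (ae_of_all _ fun y ↦ ?_)
    simp only [φ, Pi.add_apply]
    ring
  have hπt : π * t ≤ ∫ y in Ω, φ y * |g y| :=
    calc π * t ≤ π * ∫ y in Ω, ((1 / π) * log (D / ‖x - y‖) + K) * |g y| := by gcongr
      _ = ∫ y in Ω, φ y * |g y| := by
        rw [← integral_const_mul]
        congr with y
        simp only [φ]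
        field_simp
  have hexpφ : ∀ᵐ y ∂(volume.restrict Ω), ENNReal.ofReal (exp (φ y) * |g y|) =
      ENNReal.ofReal (exp (π * K)) * (ENNReal.ofReal (D / ‖x - y‖) * ENNReal.ofReal |g y|) := by
    -- off the diagonal only, since `log (D / 0) = 0`
    filter_upwards [ae_restrict_mem hΩ, Measure.ae_ne _ x] with y hy hyx
    have hxy : 0 < ‖x - y‖ := norm_pos_iff.mpr (sub_ne_zero.mpr hyx.symm)
    rw [exp_add, exp_log (div_pos (hxy.trans_le (hx y hy)) hxy),
      ← ENNReal.ofReal_mul (by positivity), ← ENNReal.ofReal_mul (exp_pos _).le]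
    ring_nf
  calc ENNReal.ofReal (exp (π * t / ∫ y in Ω, |g y|)) * ENNReal.ofReal (∫ y in Ω, |g y|)
      = ENNReal.ofReal (exp (π * t / ∫ y in Ω, |g y|) * ∫ y in Ω, |g y|) :=
        (ENNReal.ofReal_mul (exp_pos _).le).symm
    _ ≤ ENNReal.ofReal (exp ((∫ y in Ω, φ y * |g y|) / ∫ y in Ω, |g y|) * ∫ y in Ω, |g y|) := by
        have : 0 ≤ ∫ y in Ω, |g y| := integral_nonneg fun y ↦ abs_nonneg _
        gcongr
    _ ≤ ∫⁻ y in Ω, ENNReal.ofReal (exp (φ y) * |g y|) :=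
        ofReal_exp_integral_div_mul_le_lintegral (by fun_prop) (ae_of_all _ fun y ↦ abs_nonneg _)
          hg.abs hφw
    _ = ENNReal.ofReal (exp (π * K)) * T := by
        rw [lintegral_congr_ae hexpφ, lintegral_const_mul' _ _ ENNReal.ofReal_ne_top]

theorem lintegral_lintegral_div_norm_sub_le {Ω : Set (EuclideanSpace ℝ (Fin 2))}
    (hΩ : MeasurableSet Ω) {D : ℝ} (hD : 0 ≤ D) (hdiam : ∀ x ∈ Ω, ∀ y ∈ Ω, ‖x - y‖ ≤ D)
    {w : EuclideanSpace ℝ (Fin 2) → ℝ≥0∞} (hw : AEMeasurable w (volume.restrict Ω)) :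
    ∫⁻ x in Ω, ∫⁻ y in Ω, ENNReal.ofReal (D / ‖x - y‖) * w y ≤
      ENNReal.ofReal (2 * π * D ^ 2) * ∫⁻ y in Ω, w y := by
  have hkernel_meas (y : EuclideanSpace ℝ (Fin 2)) :
      Measurable fun x ↦ ENNReal.ofReal (D / ‖x - y‖) := by fun_prop
  rw [lintegral_lintegral_swap (by fun_prop), ← lintegral_const_mul' _ _ ENNReal.ofReal_ne_top]
  refine setLIntegral_mono' hΩ fun y hy ↦ ?_
  calc ∫⁻ x in Ω, ENNReal.ofReal (D / ‖x - y‖) * w y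
      = (∫⁻ x in Ω, ENNReal.ofReal (D / ‖x - y‖)) * w y := lintegral_mul_const _ (hkernel_meas y)
    _ ≤ (∫⁻ x in closedBall y D, ENNReal.ofReal (D / ‖x - y‖)) * w y := by
        gcongr
        intro x hx
        rw [mem_closedBall, dist_eq_norm]
        exact hdiam x hx y hy
    _ = ENNReal.ofReal (2 * π * D ^ 2) * w y := by
        rw [lintegral_closedBall_div_norm_sub y hD]

theorem stmt_8_general (Ω : Set (EuclideanSpace ℝ (Fin 2))) (hΩ : MeasurableSet Ω)
    (D : ℝ) (hD : 0 < D) (hdiam : ∀ x ∈ Ω, ∀ y ∈ Ω, ‖x - y‖ ≤ D)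
    (K : ℝ)
    (g : EuclideanSpace ℝ (Fin 2) → ℝ) (hg : IntegrableOn g Ω)
    (hgpos : 0 < ∫ y in Ω, |g y|)
    (v : EuclideanSpace ℝ (Fin 2) → ℝ) (hv : Measurable v)
    (hbound : ∀ᵐ x ∂(volume.restrict Ω),
      |v x| ≤ ∫ y in Ω, ((1 / π) * Real.log (D / ‖x - y‖) + K) * |g y|) :
    ∫ x in Ω, Real.exp (π * |v x| / ∫ y in Ω, |g y|)
      ≤ 2 * π * D ^ 2 * Real.exp (π * K) := by
  set M := ∫ y in Ω, |g y|
  have hlintegral : (∫⁻ x in Ω, ENNReal.ofReal (exp (π * |v x| / M))) * ENNReal.ofReal M ≤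
      ENNReal.ofReal (2 * π * D ^ 2 * exp (π * K)) * ENNReal.ofReal M :=
    calc (∫⁻ x in Ω, ENNReal.ofReal (exp (π * |v x| / M))) * ENNReal.ofReal M
        = ∫⁻ x in Ω, ENNReal.ofReal (exp (π * |v x| / M)) * ENNReal.ofReal M :=
          (lintegral_mul_const' _ _ ENNReal.ofReal_ne_top).symm
      _ ≤ ∫⁻ x in Ω, ENNReal.ofReal (exp (π * K)) *
            ∫⁻ y in Ω, ENNReal.ofReal (D / ‖x - y‖) * ENNReal.ofReal |g y| := by
          refine lintegral_mono_ae ?_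
          filter_upwards [hbound, ae_restrict_mem hΩ] with x hx hxΩ
          exact ofReal_exp_mul_le_lintegral_div_norm_sub hΩ hD.le hg (hdiam x hxΩ) hx
      _ ≤ ENNReal.ofReal (exp (π * K)) *
            (ENNReal.ofReal (2 * π * D ^ 2) * ∫⁻ y in Ω, ENNReal.ofReal |g y|) := by
          rw [lintegral_const_mul' _ _ ENNReal.ofReal_ne_top]
          gcongr
          exact lintegral_lintegral_div_norm_sub_le hΩ hD.le hdiam
            hg.abs.aemeasurable.ennreal_ofReal
      _ = ENNReal.ofReal (2 * π * D ^ 2 * exp (π * K)) * ENNReal.ofReal M := by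
          rw [← ofReal_integral_eq_lintegral_ofReal hg.abs (ae_of_all _ fun y ↦ abs_nonneg _),
            ENNReal.ofReal_mul (by positivity : (0 : ℝ) ≤ 2 * π * D ^ 2)]
          ring
  rw [integral_eq_lintegral_of_nonneg_ae (ae_of_all _ fun x ↦ (exp_pos _).le) (by fun_prop)]
  exact ENNReal.toReal_le_of_le_ofReal (by positivity) <|
    (ENNReal.mul_le_mul_iff_left (by simpa using hgpos) ENNReal.ofReal_ne_top).mp hlintegral

theorem stmt_8 (Ω : Set (EuclideanSpace ℝ (Fin 2))) (hΩ : MeasurableSet Ω)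
    (D : ℝ) (hD : 0 < D) (hdiam : ∀ x ∈ Ω, ∀ y ∈ Ω, ‖x - y‖ ≤ D)
    (K : ℝ) (hK : 0 ≤ K)
    (g : EuclideanSpace ℝ (Fin 2) → ℝ) (hg : IntegrableOn g Ω)
    (hgpos : 0 < ∫ y in Ω, |g y|)
    (v : EuclideanSpace ℝ (Fin 2) → ℝ) (hv : Measurable v)
    (hbound : ∀ᵐ x ∂(volume.restrict Ω),
      |v x| ≤ ∫ y in Ω, ((1 / π) * Real.log (D / ‖x - y‖) + K) * |g y|) :
    ∫ x in Ω, Real.exp (π * |v x| / ∫ y in Ω, |g y|)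
      ≤ 2 * π * D ^ 2 * Real.exp (π * K) :=
  stmt_8_general Ω hΩ D hD hdiam K g hg hgpos v hv hbound
end

section
/- Let Ω ⊆ ℝ² be a measurable set and D > 0 a constant with ‖x − y‖ ≤ D for all x, y ∈ Ω. Let K ≥ 0, C₁ > 0, q > 0, and ε > 0 with ε ≥ q·C₁/π. Let g : Ω → ℝ be integrable with 0 < ∫_Ω |g| dy ≤ C₁/ε, and let v : Ω → ℝ be measurable with |v(x)| ≤ ∫_Ω ((1/π)·log(D/‖x − y‖) + K)·|g(y)| dy for almost every x ∈ Ω. Then ∫_Ω e^{q·|v(x)|} dx ≤ 2π·D²·e^{πK}. -/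
/-!
Let `M = ∫_Ω |g|` and `k(x, y) = π⁻¹ log (D / ‖x - y‖) + K`, which is nonnegative on `Ω`.
Jensen's inequality for the probability measure `|g| / M` on `Ω` gives
`exp (q |v x|) ≤ ∫_Ω exp (q M k(x, y)) |g y| / M dy ≤ e^{qMK} / M ∫_Ω (D / ‖x - y‖) |g y| dy`,
since `q M ≤ π` and `D / ‖x - y‖ ≥ 1` make `exp (q M π⁻¹ log (D / ‖x - y‖)) ≤ D / ‖x - y‖`.
Integrating in `x` and exchanging the integrals, the layer-cake bound
`∫_{B(y, D)} D / ‖x - y‖ dx ≤ 2πD²` in the plane gives the total `2πD² e^{qMK} ≤ 2πD² e^{πK}`.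
-/

open MeasureTheory Real Set
open scoped ENNReal

lemma ofReal_exp_integral_le_lintegral_exp {α : Type*} [MeasurableSpace α] {μ : Measure α}
    [IsProbabilityMeasure μ] {f : α → ℝ} (hf : 0 ≤ᵐ[μ] f) :
    ENNReal.ofReal (exp (∫ a, f a ∂μ)) ≤ ∫⁻ a, ENNReal.ofReal (exp (f a)) ∂μ := by
  by_cases hfi : Integrable f μ
  · have hexp_nonneg : 0 ≤ᵐ[μ] fun a => exp (f a) := ae_of_all _ fun a => (exp_pos _).le
    by_cases hexp : Integrable (fun a => exp (f a)) μ
    · rw [← ofReal_integral_eq_lintegral_ofReal hexp hexp_nonneg]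
      exact ENNReal.ofReal_le_ofReal <|
        convexOn_exp.map_integral_le continuous_exp.continuousOn isClosed_univ
          (ae_of_all _ fun _ => mem_univ _) hfi hexp
    · rw [not_ne_iff.mp <| mt (lintegral_ofReal_ne_top_iff_integrable
        (continuous_exp.comp_aestronglyMeasurable hfi.1) hexp_nonneg).mp hexp]
      exact le_top
  · -- A nonnegative non-integrable `f` has Bochner integral `0`, and `exp ∘ f ≥ 1`.
    calc ENNReal.ofReal (exp (∫ a, f a ∂μ)) = ∫⁻ _, 1 ∂μ := by simp [integral_undef hfi]
      _ ≤ ∫⁻ a, ENNReal.ofReal (exp (f a)) ∂μ :=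
        lintegral_mono_ae <| hf.mono fun a ha => by simpa using one_le_exp ha

lemma log_div_nonneg_of_le {D r : ℝ} (hr : 0 ≤ r) (hrD : r ≤ D) : 0 ≤ log (D / r) := by
  rcases hr.eq_or_lt with rfl | hr
  · simp
  · exact log_nonneg ((one_le_div hr).mpr hrD)

lemma exp_mul_log_kernel_le {s D r K : ℝ} (hr : 0 < r) (hrD : r ≤ D) (hsπ : s ≤ π) :
    exp (s * ((1 / π) * log (D / r) + K)) ≤ D / r * exp (s * K) := by
  have hL := log_div_nonneg_of_le hr.le hrD
  have hsπ' : s * (1 / π) ≤ 1 := by rwa [mul_one_div, div_le_one pi_pos]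
  calc exp (s * ((1 / π) * log (D / r) + K)) ≤ exp (log (D / r) + s * K) := by
        gcongr
        nlinarith
    _ = D / r * exp (s * K) := by rw [exp_add, exp_log (div_pos (hr.trans_le hrD) hr)]

section

variable {E : Type*} [NormedAddCommGroup E] [MeasurableSpace E] [BorelSpace E]
  {μ : Measure E} [NullSingletonClass μ]

lemma ofReal_exp_le_lintegral_div_norm_sub_mul {Ω : Set E} (hΩ : MeasurableSet Ω) {x : E}
    {D K q M a : ℝ} (hxΩ : ∀ y ∈ Ω, ‖x - y‖ ≤ D) (hK : 0 ≤ K) (hq : 0 ≤ q) {g : E → ℝ}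
    (hg : IntegrableOn g Ω μ) (hgM : ∫ y in Ω, |g y| ∂μ = M) (hM : 0 < M) (hqM : q * M ≤ π)
    (ha : a ≤ ∫ y in Ω, ((1 / π) * log (D / ‖x - y‖) + K) * |g y| ∂μ) :
    ENNReal.ofReal (exp (q * a)) ≤ ENNReal.ofReal (exp (q * M * K) / M) *
      ∫⁻ y in Ω, ENNReal.ofReal (D / ‖x - y‖) * ENNReal.ofReal |g y| ∂μ := by
  set w : E → ℝ≥0∞ := fun y => ENNReal.ofReal (|g y| / M)
  have hw : AEMeasurable w (μ.restrict Ω) := (hg.aemeasurable.abs.div_const M).ennreal_ofReal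
  set ν := (μ.restrict Ω).withDensity w
  have : IsProbabilityMeasure ν := ⟨by
    rw [withDensity_apply _ MeasurableSet.univ, Measure.restrict_univ,
      ← ofReal_integral_eq_lintegral_ofReal (hg.abs.div_const M)
        (ae_of_all _ fun _ => by positivity), integral_div, hgM, div_self hM.ne',
      ENNReal.ofReal_one]⟩
  set f : E → ℝ := fun y => q * M * ((1 / π) * log (D / ‖x - y‖) + K)
  have hf_integral :
      ∫ y, f y ∂ν = q * ∫ y in Ω, ((1 / π) * log (D / ‖x - y‖) + K) * |g y| ∂μ := by
    rw [integral_withDensity_eq_integral_toReal_smul₀ hw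
      (ae_of_all _ fun _ => ENNReal.ofReal_lt_top), ← integral_const_mul]
    refine integral_congr_ae (ae_of_all _ fun y => ?_)
    simp only [w, f, ENNReal.toReal_ofReal (div_nonneg (abs_nonneg (g y)) hM.le), smul_eq_mul]
    field_simp
  have hf_nonneg : 0 ≤ᵐ[ν] f := (withDensity_absolutelyContinuous _ _).ae_le <|
    (ae_restrict_iff' hΩ).mpr <| ae_of_all _ fun y hy => by
      have := log_div_nonneg_of_le (norm_nonneg (x - y)) (hxΩ y hy)
      positivity
  calc ENNReal.ofReal (exp (q * a)) ≤ ENNReal.ofReal (exp (∫ y, f y ∂ν)) := by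
        rw [hf_integral]
        gcongr
    _ ≤ ∫⁻ y, ENNReal.ofReal (exp (f y)) ∂ν := ofReal_exp_integral_le_lintegral_exp hf_nonneg
    _ = ∫⁻ y in Ω, w y * ENNReal.ofReal (exp (f y)) ∂μ :=
        lintegral_withDensity_eq_lintegral_mul₀ hw (by fun_prop)
    _ ≤ ∫⁻ y in Ω, ENNReal.ofReal (exp (q * M * K) / M) *
          (ENNReal.ofReal (D / ‖x - y‖) * ENNReal.ofReal |g y|) ∂μ := by
        refine lintegral_mono_ae ?_
        filter_upwards [ae_restrict_mem hΩ, ae_restrict_of_ae (Measure.ae_ne μ x)] with y hy hyx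
        have hr : 0 < ‖x - y‖ := norm_pos_iff.mpr (sub_ne_zero.mpr hyx.symm)
        have hD : 0 ≤ D := hr.le.trans (hxΩ y hy)
        rw [← ENNReal.ofReal_mul (by positivity), ← ENNReal.ofReal_mul (by positivity),
          ← ENNReal.ofReal_mul (by positivity)]
        refine ENNReal.ofReal_le_ofReal ?_
        calc |g y| / M * exp (f y) ≤ |g y| / M * (D / ‖x - y‖ * exp (q * M * K)) := by
              gcongr
              exact exp_mul_log_kernel_le hr (hxΩ y hy) hqM
          _ = exp (q * M * K) / M * (D / ‖x - y‖ * |g y|) := by ring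
    _ = _ := lintegral_const_mul' _ _ ENNReal.ofReal_ne_top

end

lemma volume_setOf_lt_div_norm_sub_le (y : EuclideanSpace ℝ (Fin 2)) {D t : ℝ} (hD : 0 ≤ D)
    (ht : 0 < t) :
    volume {x | t < D / ‖x - y‖} ≤ ENNReal.ofReal (π * D ^ 2) * ENNReal.ofReal (t ^ (-2 : ℝ)) := by
  calc volume {x | t < D / ‖x - y‖} ≤ volume (Metric.ball y (D / t)) := by
        refine measure_mono fun x hx => ?_
        have hxy : 0 < ‖x - y‖ := by
          by_contra h
          simp only [mem_ofPred_eq, norm_le_zero_iff.mp (not_lt.mp h), norm_zero, div_zero] at hx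
          exact ht.not_gt hx
        rw [mem_ofPred_eq, lt_div_iff₀ hxy] at hx
        rw [Metric.mem_ball, dist_eq_norm, lt_div_iff₀ ht]
        linarith
    _ = ENNReal.ofReal (π * D ^ 2) * ENNReal.ofReal (t ^ (-2 : ℝ)) := by
        rw [EuclideanSpace.volume_ball_fin_two, ← ENNReal.ofReal_pow (by positivity),
          ← ENNReal.ofReal_mul (by positivity), ← ENNReal.ofReal_mul (by positivity),
          rpow_neg ht.le, rpow_two]
        congr 1
        field_simp

lemma lintegral_closedBall_div_norm_sub_le (y : EuclideanSpace ℝ (Fin 2)) {D : ℝ} (hD : 0 < D) :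
    ∫⁻ x in Metric.closedBall y D, ENNReal.ofReal (D / ‖x - y‖) ≤
      ENNReal.ofReal (2 * π * D ^ 2) := by
  set B := Metric.closedBall y D
  have hvolB : volume B = ENNReal.ofReal (π * D ^ 2) := by
    rw [EuclideanSpace.volume_closedBall_fin_two, ← ENNReal.ofReal_pow hD.le,
      ← ENNReal.ofReal_mul (by positivity), mul_comm]
  rw [lintegral_eq_lintegral_meas_lt _ (ae_of_all _ fun x => by positivity) (by fun_prop),
    ← Ioc_union_Ioi_eq_Ioi zero_le_one, lintegral_union measurableSet_Ioi (Ioc_disjoint_Ioi le_rfl)]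
  have h_small : ∫⁻ t in Ioc (0 : ℝ) 1, volume.restrict B {x | t < D / ‖x - y‖} ≤
      ENNReal.ofReal (π * D ^ 2) :=
    calc ∫⁻ t in Ioc (0 : ℝ) 1, volume.restrict B {x | t < D / ‖x - y‖}
        ≤ ∫⁻ t in Ioc (0 : ℝ) 1, volume B :=
          lintegral_mono fun t => (measure_mono (subset_univ _)).trans (by simp)
      _ = ENNReal.ofReal (π * D ^ 2) := by simp [hvolB]
  have h_large : ∫⁻ t in Ioi (1 : ℝ), volume.restrict B {x | t < D / ‖x - y‖} ≤
      ENNReal.ofReal (π * D ^ 2) :=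
    calc ∫⁻ t in Ioi (1 : ℝ), volume.restrict B {x | t < D / ‖x - y‖}
        ≤ ∫⁻ t in Ioi (1 : ℝ), ENNReal.ofReal (π * D ^ 2) * ENNReal.ofReal (t ^ (-2 : ℝ)) :=
          setLIntegral_mono' measurableSet_Ioi fun t ht =>
            (Measure.restrict_le_self _).trans
              (volume_setOf_lt_div_norm_sub_le y hD.le (zero_lt_one.trans ht))
      _ = ENNReal.ofReal (π * D ^ 2) := by
          rw [lintegral_const_mul _ (by fun_prop), ← ofReal_integral_eq_lintegral_ofReal
            (integrableOn_Ioi_rpow_of_lt (by norm_num) one_pos)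
            ((ae_restrict_iff' measurableSet_Ioi).mpr (ae_of_all _ fun t ht =>
              rpow_nonneg (zero_le_one.trans ht.le) _)),
            integral_Ioi_rpow_of_lt (by norm_num) one_pos]
          norm_num
  calc _ ≤ ENNReal.ofReal (π * D ^ 2) + ENNReal.ofReal (π * D ^ 2) := add_le_add h_small h_large
    _ = ENNReal.ofReal (2 * π * D ^ 2) := by
        rw [← ENNReal.ofReal_add (by positivity) (by positivity)]
        ring_nf

lemma lintegral_lintegral_div_norm_sub_mul_le {Ω : Set (EuclideanSpace ℝ (Fin 2))}
    (hΩ : MeasurableSet Ω) {D : ℝ} (hD : 0 < D) (hdiam : ∀ x ∈ Ω, ∀ y ∈ Ω, ‖x - y‖ ≤ D)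
    {h : EuclideanSpace ℝ (Fin 2) → ℝ≥0∞} (hh : AEMeasurable h (volume.restrict Ω)) :
    ∫⁻ x in Ω, ∫⁻ y in Ω, ENNReal.ofReal (D / ‖x - y‖) * h y ≤
      ENNReal.ofReal (2 * π * D ^ 2) * ∫⁻ y in Ω, h y := by
  rw [lintegral_lintegral_swap ((by fun_prop : Measurable fun p :
      EuclideanSpace ℝ (Fin 2) × EuclideanSpace ℝ (Fin 2) => ENNReal.ofReal (D / ‖p.1 - p.2‖)
      ).aemeasurable.mul hh.comp_snd), ← lintegral_const_mul' _ _ ENNReal.ofReal_ne_top]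
  refine setLIntegral_mono_ae' hΩ (ae_of_all _ fun y hy => ?_)
  rw [lintegral_mul_const'' _ (by fun_prop)]
  gcongr
  calc ∫⁻ x in Ω, ENNReal.ofReal (D / ‖x - y‖)
      ≤ ∫⁻ x in Metric.closedBall y D, ENNReal.ofReal (D / ‖x - y‖) :=
        lintegral_mono_set fun x hx => by
          rw [Metric.mem_closedBall, dist_eq_norm]; exact hdiam x hx y hy
    _ ≤ ENNReal.ofReal (2 * π * D ^ 2) := lintegral_closedBall_div_norm_sub_le y hD

lemma lintegral_ofReal_exp_le_of_abs_le_log_potential {Ω : Set (EuclideanSpace ℝ (Fin 2))}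
    (hΩ : MeasurableSet Ω) {D K q M : ℝ} (hD : 0 < D) (hdiam : ∀ x ∈ Ω, ∀ y ∈ Ω, ‖x - y‖ ≤ D)
    (hK : 0 ≤ K) (hq : 0 ≤ q) {g : EuclideanSpace ℝ (Fin 2) → ℝ} (hg : IntegrableOn g Ω)
    (hgM : ∫ y in Ω, |g y| = M) (hM : 0 < M) (hqM : q * M ≤ π) {v : EuclideanSpace ℝ (Fin 2) → ℝ}
    (hbound : ∀ᵐ x ∂(volume.restrict Ω),
      |v x| ≤ ∫ y in Ω, ((1 / π) * log (D / ‖x - y‖) + K) * |g y|) :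
    ∫⁻ x in Ω, ENNReal.ofReal (exp (q * |v x|)) ≤
      ENNReal.ofReal (2 * π * D ^ 2 * exp (q * M * K)) := by
  have hpointwise : ∀ᵐ x ∂volume.restrict Ω, ENNReal.ofReal (exp (q * |v x|)) ≤
      ENNReal.ofReal (exp (q * M * K) / M) *
        ∫⁻ y in Ω, ENNReal.ofReal (D / ‖x - y‖) * ENNReal.ofReal |g y| := by
    filter_upwards [hbound, ae_restrict_mem hΩ] with x hvx hx
    exact ofReal_exp_le_lintegral_div_norm_sub_mul hΩ (hdiam x hx) hK hq hg hgM hM hqM hvx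
  calc ∫⁻ x in Ω, ENNReal.ofReal (exp (q * |v x|))
      ≤ ENNReal.ofReal (exp (q * M * K) / M) *
          ∫⁻ x in Ω, ∫⁻ y in Ω, ENNReal.ofReal (D / ‖x - y‖) * ENNReal.ofReal |g y| := by
        rw [← lintegral_const_mul' _ _ ENNReal.ofReal_ne_top]
        exact lintegral_mono_ae hpointwise
    _ ≤ ENNReal.ofReal (exp (q * M * K) / M) *
          (ENNReal.ofReal (2 * π * D ^ 2) * ∫⁻ y in Ω, ENNReal.ofReal |g y|) := by
        gcongr
        exact lintegral_lintegral_div_norm_sub_mul_le hΩ hD hdiam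
          hg.aemeasurable.abs.ennreal_ofReal
    _ = ENNReal.ofReal (2 * π * D ^ 2 * exp (q * M * K)) := by
        rw [← ofReal_integral_eq_lintegral_ofReal hg.abs (ae_of_all _ fun _ => abs_nonneg _),
          hgM, ← ENNReal.ofReal_mul (by positivity), ← ENNReal.ofReal_mul (by positivity)]
        congr 1
        field_simp

theorem stmt_9_general (Ω : Set (EuclideanSpace ℝ (Fin 2))) (hΩ : MeasurableSet Ω)
    (D : ℝ) (hD : 0 < D) (hdiam : ∀ x ∈ Ω, ∀ y ∈ Ω, ‖x - y‖ ≤ D)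
    (K : ℝ) (hK : 0 ≤ K) (C₁ : ℝ) (q : ℝ) (hq : 0 < q)
    (ε : ℝ) (hε : 0 < ε) (hεq : q * C₁ / π ≤ ε)
    (g : EuclideanSpace ℝ (Fin 2) → ℝ) (hg : IntegrableOn g Ω)
    (hgpos : 0 < ∫ y in Ω, |g y|) (hgle : ∫ y in Ω, |g y| ≤ C₁ / ε)
    (v : EuclideanSpace ℝ (Fin 2) → ℝ)
    (hbound : ∀ᵐ x ∂(volume.restrict Ω),
      |v x| ≤ ∫ y in Ω, ((1 / π) * Real.log (D / ‖x - y‖) + K) * |g y|) :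
    ∫ x in Ω, Real.exp (q * |v x|) ≤ 2 * π * D ^ 2 * Real.exp (π * K) := by
  obtain ⟨M, hgM⟩ : ∃ M, ∫ y in Ω, |g y| = M := ⟨_, rfl⟩
  rw [hgM] at hgpos hgle
  have hqM : q * M ≤ π := by
    rw [div_le_iff₀ pi_pos] at hεq
    calc q * M ≤ q * (C₁ / ε) := by gcongr
      _ ≤ π := by rw [← mul_div_assoc, div_le_iff₀ hε]; linarith
  have hlintegral : ∫⁻ x in Ω, ENNReal.ofReal (exp (q * |v x|)) ≤
      ENNReal.ofReal (2 * π * D ^ 2 * exp (π * K)) :=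
    (lintegral_ofReal_exp_le_of_abs_le_log_potential hΩ hD hdiam hK hq.le hg hgM hgpos hqM
      hbound).trans (by gcongr)
  calc ∫ x in Ω, exp (q * |v x|) ≤ ‖∫ x in Ω, exp (q * |v x|)‖ := le_norm_self _
    _ ≤ (∫⁻ x in Ω, ENNReal.ofReal ‖exp (q * |v x|)‖).toReal := norm_integral_le_lintegral_norm _
    _ ≤ 2 * π * D ^ 2 * exp (π * K) := ENNReal.toReal_le_of_le_ofReal (by positivity)
        (by simpa only [norm_of_nonneg (exp_pos _).le] using hlintegral)

theorem stmt_9 (Ω : Set (EuclideanSpace ℝ (Fin 2))) (hΩ : MeasurableSet Ω)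
    (D : ℝ) (hD : 0 < D) (hdiam : ∀ x ∈ Ω, ∀ y ∈ Ω, ‖x - y‖ ≤ D)
    (K : ℝ) (hK : 0 ≤ K) (C₁ : ℝ) (hC₁ : 0 < C₁) (q : ℝ) (hq : 0 < q)
    (ε : ℝ) (hε : 0 < ε) (hεq : q * C₁ / π ≤ ε)
    (g : EuclideanSpace ℝ (Fin 2) → ℝ) (hg : IntegrableOn g Ω)
    (hgpos : 0 < ∫ y in Ω, |g y|) (hgle : ∫ y in Ω, |g y| ≤ C₁ / ε)
    (v : EuclideanSpace ℝ (Fin 2) → ℝ) (hv : Measurable v)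
    (hbound : ∀ᵐ x ∂(volume.restrict Ω),
      |v x| ≤ ∫ y in Ω, ((1 / π) * Real.log (D / ‖x - y‖) + K) * |g y|) :
    ∫ x in Ω, Real.exp (q * |v x|) ≤ 2 * π * D ^ 2 * Real.exp (π * K) :=
  stmt_9_general Ω hΩ D hD hdiam K hK C₁ q hq ε hε hεq g hg hgpos hgle v hbound
end
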